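/- Let A be an associative unital ℂ-algebra with nonzero scalars p, q, and elements G_i, G_j, F_i, F_j satisfying the Party-Hecke relations: G_k² = pq² + p(p−1)F_k, G_kF_k = F_kG_k = pqF_k, F_k² = q²F_k for k ∈ {i,j}, F_iF_j = F_jF_i, and G_iG_jF_i = F_jG_iG_j. Then G_iF_jF_i = F_jG_iF_j = F_iF_jG_i. -/
import Mathlib


/-- In an associative unital `ℂ`-algebra, if `G_i, G_j, F_i, F_j` satisfy the
Party-Hecke relations (for `|i−j| = 1`), then
`G_i F_j F_i = F_j G_i F_j = F_i F_j G_i`. -/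
theorem partyHecke_GFF (A : Type*) [Ring A] [Algebra ℂ A]
    (p q : ℂ) (hp : p ≠ 0) (hq : q ≠ 0) (Gi Gj Fi Fj : A)
    (hGi2 : Gi ^ 2 = algebraMap ℂ A (p * q ^ 2) + (p * (p - 1)) • Fi)
    (hGj2 : Gj ^ 2 = algebraMap ℂ A (p * q ^ 2) + (p * (p - 1)) • Fj)
    (hGiFi : Gi * Fi = (p * q) • Fi) (hFiGi : Fi * Gi = (p * q) • Fi)
    (hGjFj : Gj * Fj = (p * q) • Fj) (hFjGj : Fj * Gj = (p * q) • Fj)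
    (hFi2 : Fi ^ 2 = q ^ 2 • Fi) (hFj2 : Fj ^ 2 = q ^ 2 • Fj)
    (hFF : Fi * Fj = Fj * Fi)
    (hbraidF : Gi * Gj * Fi = Fj * (Gi * Gj)) :
    Gi * (Fj * Fi) = Fj * (Gi * Fj) ∧ Fj * (Gi * Fj) = Fi * (Fj * Gi) := by
  have hpq : p * q ≠ 0 := mul_ne_zero hp hq
  -- Gi * (Fj * Fi) = (p*q) • (Fi * Fj)
  have hA : Gi * (Fj * Fi) = (p * q) • (Fi * Fj) := by
    calc Gi * (Fj * Fi) = Gi * (Fi * Fj) := by rw [hFF]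
    _ = Gi * Fi * Fj := by rw [mul_assoc]
    _ = (p * q) • (Fi * Fj) := by rw [hGiFi, smul_mul_assoc]
  -- Fi * (Fj * Gi) = (p*q) • (Fi * Fj)
  have hB : Fi * (Fj * Gi) = (p * q) • (Fi * Fj) := by
    calc Fi * (Fj * Gi) = Fi * Fj * Gi := by rw [mul_assoc]
    _ = Fj * (Fi * Gi) := by rw [hFF, mul_assoc]
    _ = (p * q) • (Fj * Fi) := by rw [hFiGi, mul_smul_comm]
    _ = (p * q) • (Fi * Fj) := by rw [hFF]
  -- multiply the braid relation by Fj on the right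
  have hkey : (p * q) • (Fj * (Gi * Fj)) = (p * q) • ((p * q) • (Fi * Fj)) := by
    have h := congrArg (· * Fj) hbraidF
    calc (p * q) • (Fj * (Gi * Fj))
        = Fj * (Gi * (Gj * Fj)) := by
          rw [hGjFj, mul_smul_comm, mul_smul_comm]
    _ = Fj * (Gi * Gj) * Fj := by rw [mul_assoc, mul_assoc]
    _ = Gi * Gj * Fi * Fj := by rw [h]
    _ = Gi * (Gj * (Fi * Fj)) := by rw [mul_assoc, mul_assoc]
    _ = Gi * (Gj * Fj * Fi) := by rw [hFF, mul_assoc]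
    _ = (p * q) • (Gi * (Fj * Fi)) := by
          rw [hGjFj, smul_mul_assoc, mul_smul_comm]
    _ = (p * q) • ((p * q) • (Fi * Fj)) := by rw [hA]
  have hC : Fj * (Gi * Fj) = (p * q) • (Fi * Fj) :=
    smul_right_injective A hpq hkey
  exact ⟨hA.trans hC.symm, hC.trans hB.symm⟩
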